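/- In a locally symmetric implication algebra with involution T and Δ(b,a) = b ∧ T(b→a), if a ≤ b ≤ c then Δ(c,b) → Δ(c,a) = T(b → a), and consequently Δ(Δ(c,b), Δ(c,a)) = Δ(c, Δ(b,a)). -/
import Mathlib


/-- An implication algebra: a join-semilattice with greatest element 1 in which
every interval [a,1] is a Boolean algebra, with `imp b a` (written b → a) the
relative complement of b over a. It satisfies (x→y)→y = x ⊔ y and
x→(y→z) = y→(x→z), and for a ≤ b, b → a is the complement of b in [a,1]. -/
class ImplicationAlgebra (α : Type*) extends SemilatticeSup α, OrderTop α where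
  imp : α → α → α
  imp_imp : ∀ a b : α, imp (imp a b) b = a ⊔ b
  exchange : ∀ a b c : α, imp a (imp b c) = imp b (imp a c)
  imp_glb : ∀ a b : α, a ≤ b → IsGLB {b, imp b a} a
  imp_sup : ∀ a b : α, a ≤ b → b ⊔ imp b a = ⊤

open ImplicationAlgebra

section IaLemmas

variable {α : Type*} [ImplicationAlgebra α]

lemma ia_mem_lb {x y z : α} (h1 : z ≤ x) (h2 : z ≤ y) :
    z ∈ lowerBounds ({x, y} : Set α) := by
  intro w hw
  rcases hw with rfl | hw
  · exact h1
  · rw [Set.mem_singleton_iff] at hw; subst hw; exact h2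

lemma ia_glb_le_left {x y m : α} (h : IsGLB {x, y} m) : m ≤ x :=
  h.1 (Set.mem_insert _ _)

lemma ia_glb_le_right {x y m : α} (h : IsGLB {x, y} m) : m ≤ y :=
  h.1 (Set.mem_insert_of_mem _ rfl)

lemma ia_imp_self (a : α) : imp a a = ⊤ := by
  have h1 : a ≤ imp a a := ia_glb_le_right (imp_glb a a le_rfl)
  have h2 := imp_sup a a le_rfl
  rwa [sup_eq_right.mpr h1] at h2

lemma ia_imp_top (a : α) : imp a ⊤ = ⊤ := by
  have h1 : imp (imp a ⊤) ⊤ = ⊤ := by rw [imp_imp]; simp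
  have h2 := exchange a (imp a ⊤) ⊤
  rw [h1, ia_imp_self] at h2
  exact h2

lemma ia_top_imp (a : α) : imp ⊤ a = a := by
  have h := imp_glb a ⊤ le_top
  exact le_antisymm (h.2 (ia_mem_lb le_top le_rfl)) (ia_glb_le_right h)

lemma ia_self_le_imp (x y : α) : y ≤ imp x y := by
  have h1 : imp y (imp x y) = ⊤ := by
    rw [exchange, ia_imp_self, ia_imp_top]
  have h2 := imp_imp y (imp x y)
  rw [h1, ia_top_imp] at h2
  exact le_sup_left.trans h2.ge

lemma ia_imp_eq_top {a b : α} (h : a ≤ b) : imp a b = ⊤ := by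
  have h1 : imp (imp a b) b = b := by rw [imp_imp, sup_eq_right.mpr h]
  have h2 := imp_imp (imp a b) b
  rw [h1, ia_imp_self, sup_eq_left.mpr (ia_self_le_imp a b)] at h2
  exact h2.symm

lemma ia_le_of_imp {a b : α} (h : imp a b = ⊤) : a ≤ b := by
  have h2 := imp_imp a b
  rw [h, ia_top_imp] at h2
  exact le_sup_left.trans h2.ge

lemma ia_imp_anti {a b : α} (h : a ≤ b) (c : α) : imp b c ≤ imp a c := by
  apply ia_le_of_imp
  rw [exchange, imp_imp]
  exact ia_imp_eq_top (h.trans le_sup_left)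

lemma ia_imp_mono {a b : α} (h : a ≤ b) (c : α) : imp c a ≤ imp c b := by
  have hb : imp (imp b a) a = b := by rw [imp_imp, sup_eq_left.mpr h]
  calc imp c a ≤ imp (imp b a) (imp c a) := ia_self_le_imp _ _
    _ = imp c (imp (imp b a) a) := (exchange _ _ _).symm
    _ = imp c b := by rw [hb]

lemma ia_le_imp_comm {x y z : α} : x ≤ imp y z ↔ y ≤ imp x z := by
  constructor
  · intro h
    apply ia_le_of_imp
    rw [exchange]
    exact ia_imp_eq_top h
  · intro h
    apply ia_le_of_imp
    rw [exchange]
    exact ia_imp_eq_top h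

lemma ia_sup_imp (x y : α) : x ⊔ imp x y = ⊤ := by
  have h := imp_sup y (x ⊔ y) le_sup_right
  refine top_unique ?_
  rw [← h]
  exact sup_le (sup_le le_sup_left ((ia_self_le_imp x y).trans le_sup_right))
    ((ia_imp_anti le_sup_left y).trans le_sup_right)

lemma ia_imp_of_sup {x z : α} (h : x ⊔ z = ⊤) : imp x z = z := by
  refine le_antisymm (ia_le_of_imp ?_) (ia_self_le_imp _ _)
  rw [imp_imp, h]

lemma ia_imp_imp_self (x y : α) : imp x (imp x y) = imp x y := by
  refine le_antisymm (ia_le_of_imp ?_) (ia_imp_mono (ia_self_le_imp x y) x)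
  rw [imp_imp]
  exact ia_sup_imp x y

lemma ia_glb_formula {a x y : α} (hax : a ≤ x) (hay : a ≤ y) :
    IsGLB {x, y} (imp (imp x a ⊔ imp y a) a) := by
  constructor
  · apply ia_mem_lb
    · have := ia_imp_anti (le_sup_left : imp x a ≤ imp x a ⊔ imp y a) a
      rwa [imp_imp, sup_eq_left.mpr hax] at this
    · have := ia_imp_anti (le_sup_right : imp y a ≤ imp x a ⊔ imp y a) a
      rwa [imp_imp, sup_eq_left.mpr hay] at this
  · intro z hz
    have hzx : z ≤ x := hz (Set.mem_insert _ _)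
    have hzy : z ≤ y := hz (Set.mem_insert_of_mem _ rfl)
    exact ia_le_imp_comm.mpr (sup_le (ia_imp_anti hzx a) (ia_imp_anti hzy a))

lemma ia_sup_of_glb {x y m : α} (h : IsGLB {x, y} m) :
    imp x m ⊔ imp y m = ⊤ := by
  have hmx := ia_glb_le_left h
  have hmy := ia_glb_le_right h
  have h2 := ia_glb_formula hmx hmy
  have heq : imp (imp x m ⊔ imp y m) m = m := h2.unique h
  have hm : m ≤ imp x m ⊔ imp y m := (ia_self_le_imp x m).trans le_sup_left
  have h3 := imp_imp (imp x m ⊔ imp y m) m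
  rw [heq, ia_imp_self, sup_eq_left.mpr hm] at h3
  exact h3.symm

lemma ia_glb_of_sup {a x y : α} (hax : a ≤ x) (hay : a ≤ y)
    (h : imp x a ⊔ imp y a = ⊤) : IsGLB {x, y} a := by
  have := ia_glb_formula hax hay
  rwa [h, ia_top_imp] at this

lemma ia_compl_aux {a x u : α} (hax : a ≤ x) (hsup : x ⊔ u = ⊤) :
    imp u a ≤ x := by
  have h1 : imp u x = x := ia_imp_of_sup (by rwa [sup_comm] at hsup)
  calc imp u a ≤ imp u x := ia_imp_mono hax u
    _ = x := h1

lemma ia_compl_unique {a x u : α} (hax : a ≤ x) (hau : a ≤ u)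
    (hsup : x ⊔ u = ⊤) (hsup2 : imp x a ⊔ imp u a = ⊤) : u = imp x a := by
  have h2 : imp x a ≤ u := ia_compl_aux hau (by rwa [sup_comm] at hsup)
  have h3 : imp (imp u a) a ≤ imp x a := ia_compl_aux (ia_self_le_imp x a) hsup2
  have h4 : imp (imp u a) a = u := by rw [imp_imp, sup_eq_left.mpr hau]
  exact le_antisymm (h4 ▸ h3) h2

lemma ia_imp_imp_of_le {g v : α} (hgv : g ≤ v) (s : α) :
    imp (imp s g) v = s ⊔ v := by
  have hsgv : imp s g ≤ imp s v := ia_imp_mono hgv s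
  have hsup : imp s v ⊔ imp (imp s g) v = ⊤ := by
    refine top_unique ?_
    rw [← ia_sup_imp (imp s g) v]
    exact sup_le (hsgv.trans le_sup_left) le_sup_right
  have hsup2 : imp (imp s v) v ⊔ imp (imp (imp s g) v) v = ⊤ := by
    rw [imp_imp, imp_imp]
    refine top_unique ?_
    rw [← ia_sup_imp s g]
    exact sup_le (le_sup_of_le_left le_sup_left) (le_sup_of_le_right le_sup_left)
  have h := ia_compl_unique (ia_self_le_imp s v) (ia_self_le_imp (imp s g) v) hsup hsup2
  rw [h, imp_imp]

lemma ia_imp_le_sup (u w c : α) : imp (imp u w) c ≤ u ⊔ c := by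
  have h1 : imp u w ⊔ (u ⊔ c) = ⊤ := by
    refine top_unique ?_
    rw [← ia_sup_imp u w]
    exact sup_le (le_sup_of_le_right le_sup_left) le_sup_left
  calc imp (imp u w) c ≤ imp (imp u w) (u ⊔ c) := ia_imp_mono le_sup_right _
    _ = u ⊔ c := ia_imp_of_sup h1

lemma ia_imp_glb {x y m : α} (h : IsGLB {x, y} m) (u : α) :
    IsGLB {imp u x, imp u y} (imp u m) := by
  have hmx := ia_glb_le_left h
  have hmy := ia_glb_le_right h
  apply ia_glb_of_sup (ia_imp_mono hmx u) (ia_imp_mono hmy u)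
  refine top_unique ?_
  rw [← ia_sup_of_glb h]
  apply sup_le
  · refine le_sup_of_le_left (ia_le_of_imp ?_)
    rw [exchange (imp x m) (imp u x) (imp u m), exchange (imp x m) u m,
      imp_imp, sup_eq_left.mpr hmx, ia_imp_self]
  · refine le_sup_of_le_right (ia_le_of_imp ?_)
    rw [exchange (imp y m) (imp u y) (imp u m), exchange (imp y m) u m,
      imp_imp, sup_eq_left.mpr hmy, ia_imp_self]

end IaLemmas

/-- In a locally symmetric implication algebra with involution T, with
Δ(b,a) = b ∧ T(b → a): if a ≤ b ≤ c then Δ(c,b) → Δ(c,a) = T(b → a), and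
consequently Δ(Δ(c,b), Δ(c,a)) = Δ(c, Δ(b,a)). -/
theorem locSym_delta_comm {α : Type*} [ImplicationAlgebra α]
    (T : α → α) (hT2 : ∀ x, T (T x) = x)
    (hThom : ∀ x y : α, T (imp x y) = imp (T x) (T y))
    (hId : ∀ x y : α, imp x (T x) ⊔ y ⊔ T y = ⊤)
    (hloc : ∀ x y : α, y ≤ x → ∃ m, IsGLB {x, T (imp x y)} m)
    (a b c dcb dca dba e f : α) (hab : a ≤ b) (hbc : b ≤ c)
    (hdcb : IsGLB {c, T (imp c b)} dcb)
    (hdca : IsGLB {c, T (imp c a)} dca)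
    (hdba : IsGLB {b, T (imp b a)} dba)
    (he : IsGLB {dcb, T (imp dcb dca)} e)
    (hf : IsGLB {c, T (imp c dba)} f) :
    imp dcb dca = T (imp b a) ∧ e = f := by
  -- T is monotone and fixes ⊤
  have hTtop : T (⊤ : α) = ⊤ := by
    have h := hThom (⊤ : α) ⊤
    rw [ia_imp_self, ia_imp_self] at h
    exact h
  have hTmono : ∀ x y : α, x ≤ y → T x ≤ T y := by
    intro x y h
    apply ia_le_of_imp
    rw [← hThom, ia_imp_eq_top h, hTtop]
  have hac : a ≤ c := hab.trans hbc
  have hqr : imp c a ≤ imp b a := ia_imp_anti hbc a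
  have hqp : imp c a ≤ imp c b := ia_imp_mono hab c
  have har : a ≤ imp b a := ia_self_le_imp b a
  have hdca_c : dca ≤ c := ia_glb_le_left hdca
  have hdca_Tq : dca ≤ T (imp c a) := ia_glb_le_right hdca
  have hdca_Tr : dca ≤ T (imp b a) := hdca_Tq.trans (hTmono _ _ hqr)
  have hdca_Tp : dca ≤ T (imp c b) := hdca_Tq.trans (hTmono _ _ hqp)
  have hdcb_c : dcb ≤ c := ia_glb_le_left hdcb
  have hdcb_Tp : dcb ≤ T (imp c b) := ia_glb_le_right hdcb
  have hdca_dcb : dca ≤ dcb := hdcb.2 (ia_mem_lb hdca_c hdca_Tp)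
  -- Claim A : (c→b)→(c→a) = b→a
  have hbeq : imp (imp b a) a = b := by rw [imp_imp, sup_eq_left.mpr hab]
  have hpA : imp c b = imp (imp b a) (imp c a) := by
    conv_lhs => rw [← hbeq]
    exact exchange c (imp b a) a
  have hA : imp (imp c b) (imp c a) = imp b a := by
    rw [hpA, imp_imp, sup_eq_left.mpr hqr]
  -- c ⊔ T(b→a) = ⊤  (uses hId)
  have hE : imp (T (imp b a)) c ≤ T b ⊔ c := by
    rw [hThom]
    exact ia_imp_le_sup _ _ _
  have hTb_c : imp (T b) c ≤ c ⊔ T (imp b a) := by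
    have h1 : imp (imp (T b) c) (imp (imp (T (imp b a)) c) c) = ⊤ := by
      rw [exchange (imp (T b) c) (imp (T (imp b a)) c) c, imp_imp]
      exact ia_imp_eq_top hE
    have h2 := ia_le_of_imp h1
    rwa [imp_imp, sup_comm] at h2
  have hcTr : c ⊔ T (imp b a) = ⊤ := by
    have hid := hId (T b) a
    rw [hT2 b] at hid
    refine top_unique ?_
    rw [← hid]
    refine sup_le (sup_le ?_ ?_) ?_
    · exact (ia_imp_mono hbc (T b)).trans hTb_c
    · exact le_sup_of_le_left hac
    · exact le_sup_of_le_right (hTmono _ _ har)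
  have hcTr_imp : imp c (T (imp b a)) = T (imp b a) := ia_imp_of_sup hcTr
  -- dcb via the meet formula over base dca
  have hM := ia_glb_formula hdca_c hdca_Tp
  have hdcb_eq : dcb = imp (imp c dca ⊔ imp (T (imp c b)) dca) dca := hdcb.unique hM
  have hs_le : imp c dca ⊔ imp (T (imp c b)) dca ≤ T (imp b a) := by
    apply sup_le
    · calc imp c dca ≤ imp c (T (imp b a)) := ia_imp_mono hdca_Tr c
        _ = T (imp b a) := hcTr_imp
    · calc imp (T (imp c b)) dca ≤ imp (T (imp c b)) (T (imp c a)) :=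
            ia_imp_mono hdca_Tq _
        _ = T (imp (imp c b) (imp c a)) := (hThom _ _).symm
        _ = T (imp b a) := by rw [hA]
  have hsup3 : dcb ⊔ T (imp b a) = ⊤ := by
    have h1 : imp dcb (T (imp b a)) = T (imp b a) := by
      rw [hdcb_eq, ia_imp_imp_of_le hdca_Tr, sup_eq_right.mpr hs_le]
    have h2 := imp_imp dcb (T (imp b a))
    rw [h1, ia_imp_self] at h2
    exact h2.symm
  -- dca is the GLB of {dcb, T(b→a)}
  have hK : ∀ z : α, z ≤ dcb → z ≤ T (imp b a) → z ≤ dca := by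
    intro z h1 h2
    have hzc : z ≤ c := h1.trans hdcb_c
    have hzTp : z ≤ T (imp c b) := h1.trans hdcb_Tp
    have hTz_p : T z ≤ imp c b := by
      have := hTmono _ _ hzTp; rwa [hT2] at this
    have hTz_r : T z ≤ imp b a := by
      have := hTmono _ _ h2; rwa [hT2] at this
    have hc1 : c ≤ imp (T z) b := ia_le_imp_comm.mp hTz_p
    have hb1 : b ≤ imp (T z) a := ia_le_imp_comm.mp hTz_r
    have hc2 : c ≤ imp (T z) a := by
      calc c ≤ imp (T z) b := hc1
        _ ≤ imp (T z) (imp (T z) a) := ia_imp_mono hb1 _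
        _ = imp (T z) a := ia_imp_imp_self _ _
    have hTz_q : T z ≤ imp c a := ia_le_imp_comm.mp hc2
    have hz_Tq : z ≤ T (imp c a) := by
      have := hTmono _ _ hTz_q; rwa [hT2] at this
    exact hdca.2 (ia_mem_lb hzc hz_Tq)
  have hglb4 : IsGLB {dcb, T (imp b a)} dca :=
    ⟨ia_mem_lb hdca_dcb hdca_Tr, fun z hz =>
      hK z (hz (Set.mem_insert _ _)) (hz (Set.mem_insert_of_mem _ rfl))⟩
  -- Goal 1
  have hGoal1 : imp dcb dca = T (imp b a) :=
    (ia_compl_unique hdca_dcb hdca_Tr hsup3 (ia_sup_of_glb hglb4)).symm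
  refine ⟨hGoal1, ?_⟩
  -- Goal 2
  have he' : IsGLB {dcb, imp b a} e := by
    have h : T (imp dcb dca) = imp b a := by rw [hGoal1, hT2]
    rwa [h] at he
  have hu0 : IsGLB {imp c b, imp c (T (imp b a))} (imp c dba) := ia_imp_glb hdba c
  rw [hcTr_imp] at hu0
  have hTglb : ∀ x y m : α, IsGLB {x, y} m → IsGLB {T x, T y} (T m) := by
    intro x y m h
    refine ⟨ia_mem_lb (hTmono _ _ (ia_glb_le_left h)) (hTmono _ _ (ia_glb_le_right h)), ?_⟩
    intro w hw
    have h1 : T w ≤ x := by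
      have := hTmono _ _ (hw (Set.mem_insert _ _)); rwa [hT2] at this
    have h2 : T w ≤ y := by
      have := hTmono _ _ (hw (Set.mem_insert_of_mem _ rfl)); rwa [hT2] at this
    have h3 := hTmono _ _ (h.2 (ia_mem_lb h1 h2))
    rwa [hT2] at h3
  have hu : IsGLB {T (imp c b), imp b a} (T (imp c dba)) := by
    have h := hTglb _ _ _ hu0
    rwa [hT2] at h
  have hf_c : f ≤ c := ia_glb_le_left hf
  have hf_u : f ≤ T (imp c dba) := ia_glb_le_right hf
  have he_dcb : e ≤ dcb := ia_glb_le_left he'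
  have he_r : e ≤ imp b a := ia_glb_le_right he'
  apply le_antisymm
  · have h1 : e ≤ T (imp c dba) := hu.2 (ia_mem_lb (he_dcb.trans hdcb_Tp) he_r)
    exact hf.2 (ia_mem_lb (he_dcb.trans hdcb_c) h1)
  · have h1 : f ≤ dcb := hdcb.2 (ia_mem_lb hf_c (hf_u.trans (ia_glb_le_left hu)))
    exact he'.2 (ia_mem_lb h1 (hf_u.trans (ia_glb_le_right hu)))
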